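/- Fix d ≥ 2 and λ ∈ [0,1]. For every finite set E of nearest-neighbor edges of Z^d, the probability that all edges of E are simultaneously open, ℙ_{p,λ,d}(σ(e) = 1 for all e ∈ E), is non-increasing in the site parameter p: for 0 < p_1 < p_2 ≤ 1, ℙ_{p_1,λ,d}(σ(E) ≡ 1) ≥ ℙ_{p_2,λ,d}(σ(E) ≡ 1). -/

import Mathlib

open MeasureTheory ENNReal

namespace AlignmentPercolation

/-- Sites of the lattice `ℤ^d`. -/
abbrev Site (d : ℕ) := Fin d → ℤ

/-- A site configuration: `true` means occupied. -/
abbrev SiteCfg (d : ℕ) := Site d → Bool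

/-- Labels (open/closed) attached to (potential) segments, indexed by their ordered
pair of endpoints. -/
abbrev PairLabels (d : ℕ) := Site d × Site d → Bool

/-- A configuration of the independent alignment percolation model: a site
configuration together with independent labels for the segments. -/
abbrev Cfg (d : ℕ) := SiteCfg d × PairLabels d

/-- Nearest-neighbour edges of `ℤ^d`, indexed by their lower endpoint and direction:
`(u, i)` is the edge from `u` to `u + e_i`. -/
abbrev EdgeIdx (d : ℕ) := Site d × Fin d

/-- The point obtained from `u` by replacing its `i`-th coordinate with `a`. -/
def seg {d : ℕ} (u : Site d) (i : Fin d) (a : ℤ) : Site d := Function.update u i a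

/-- The point `u + e_i`. -/
def up {d : ℕ} (u : Site d) (i : Fin d) : Site d := seg u i (u i + 1)

/-- The skewed doubling map underlying the construction of an i.i.d.
Bernoulli(p) sequence from a single uniform random variable on `[0,1)`. -/
noncomputable def bernShift (p : ℝ) (x : ℝ) : ℝ :=
  if x < p then x / p else (x - p) / (1 - p)

open scoped Classical in
noncomputable def bernDigit (p : ℝ) (x : ℝ) : Bool := if x < p then true else false

/-- The sequence of skewed binary digits of `x`; under the uniform distribution on
`[0,1)` this is an i.i.d. Bernoulli(p) sequence. -/
noncomputable def bernDigits (p : ℝ) (x : ℝ) : ℕ → Bool :=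
  fun n => bernDigit p ((bernShift p)^[n] x)

/-- The i.i.d. Bernoulli(p) product probability measure on `ι → Bool`, for a countable
index type `ι`: the law of the family of skewed binary digits (indexed through an
injection `ι ↪ ℕ`) of a uniform random variable on `[0,1)`. Each coordinate is `true`
with probability `p` (with the convention that `p` is clamped to `[0,1]`). -/
noncomputable def iidBool (ι : Type*) [Countable ι] (p : ℝ) : Measure (ι → Bool) :=
  Measure.map (fun f (i : ι) => f ((Countable.exists_injective_nat ι).choose i))
    (Measure.map (bernDigits p) (volume.restrict (Set.Ico (0 : ℝ) 1)))

/-- The law `ℙ_{p,λ,d}` of the independent alignment percolation model: sites are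
occupied independently with probability `p`, and independently every potential
segment carries an independent Bernoulli(λ) label. -/
noncomputable def alignMeasure (d : ℕ) (p lam : ℝ) : Measure (Cfg d) :=
  (iidBool (Site d) p).prod (iidBool (Site d × Site d) lam)

/-- `(v, w)` is a feasible pair of the site configuration `ω` (ordered so that the
coordinate where they differ increases): `v` and `w` differ in exactly one
coordinate, are both occupied, and no site strictly between them is occupied. -/
def FeasiblePair {d : ℕ} (ω : SiteCfg d) (v w : Site d) : Prop :=
  ∃ i : Fin d, (∀ j, j ≠ i → v j = w j) ∧ v i < w i ∧
    ω v = true ∧ ω w = true ∧ ∀ c : ℤ, v i < c → c < w i → ω (seg v i c) = false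

/-- The edge `e` lies on the axis-parallel segment with endpoints `v` and `w`. -/
def EdgeOnSeg {d : ℕ} (e : EdgeIdx d) (v w : Site d) : Prop :=
  ∃ a b : ℤ, a ≤ e.1 e.2 ∧ e.1 e.2 < b ∧ v = seg e.1 e.2 a ∧ w = seg e.1 e.2 b

/-- The edge `e` is open in the configuration `ξ`: it lies on the segment of a
feasible pair whose label is open. -/
def EdgeOpen {d : ℕ} (ξ : Cfg d) (e : EdgeIdx d) : Prop :=
  ∃ v w : Site d, FeasiblePair ξ.1 v w ∧ EdgeOnSeg e v w ∧ ξ.2 (v, w) = true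

/-- The induced edge configuration `σ ∈ {0,1}^{E^d}` (as a `Bool`). -/
noncomputable def edgeState {d : ℕ} (ξ : Cfg d) (e : EdgeIdx d) : Bool :=
  @decide (EdgeOpen ξ e) (Classical.propDecidable _)

/-- The graph on `ℤ^d` whose edges are the open edges of the configuration `ξ`. -/
def openGraph {d : ℕ} (ξ : Cfg d) : SimpleGraph (Site d) where
  Adj u v := ∃ i, (v = up u i ∧ EdgeOpen ξ (u, i)) ∨ (u = up v i ∧ EdgeOpen ξ (v, i))
  symm := by constructor; rintro u v ⟨i, h | h⟩; exacts [⟨i, Or.inr h⟩, ⟨i, Or.inl h⟩]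
  loopless := by
    constructor
    rintro u ⟨i, ⟨h, -⟩ | ⟨h, -⟩⟩ <;>
    · have := congrFun h i
      simp [up, seg] at this

/-- The site `v` lies in an infinite connected component of open edges. -/
def PercolatesFrom {d : ℕ} (ξ : Cfg d) (v : Site d) : Prop :=
  {w | (openGraph ξ).Reachable v w}.Infinite

/-- The set `𝒪` of open edges percolates. -/
def Percolates {d : ℕ} (ξ : Cfg d) : Prop := ∃ v, PercolatesFrom ξ v

/-- `θ(p,λ,d)`: the probability that the origin lies in an infinite open cluster. -/
noncomputable def theta (d : ℕ) (p lam : ℝ) : ℝ≥0∞ :=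
  alignMeasure d p lam {ξ | PercolatesFrom ξ 0}

/-- `ℙ_{p,λ,d}(𝒪 percolates)`. -/
noncomputable def percProb (d : ℕ) (p lam : ℝ) : ℝ≥0∞ :=
  alignMeasure d p lam {ξ | Percolates ξ}

/-- The critical segment parameter `λ_c(p,d) = sup {λ ≥ 0 : θ(p,λ,d) = 0}`. -/
noncomputable def lambdaC (d : ℕ) (p : ℝ) : ℝ :=
  sSup {lam : ℝ | 0 ≤ lam ∧ theta d p lam = 0}

/-- A configuration of Bernoulli bond percolation on `ℤ^d`. -/
abbrev BondCfg (d : ℕ) := EdgeIdx d → Bool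

/-- Independent Bernoulli(λ) bond percolation on `ℤ^d`. -/
noncomputable def bondMeasure (d : ℕ) (lam : ℝ) : Measure (BondCfg d) :=
  iidBool (EdgeIdx d) lam

/-- The graph of open bonds of a bond configuration. -/
def bondGraph {d : ℕ} (σ : BondCfg d) : SimpleGraph (Site d) where
  Adj u v := ∃ i, (v = up u i ∧ σ (u, i) = true) ∨ (u = up v i ∧ σ (v, i) = true)
  symm := by constructor; rintro u v ⟨i, h | h⟩; exacts [⟨i, Or.inr h⟩, ⟨i, Or.inl h⟩]
  loopless := by
    constructor
    rintro u ⟨i, ⟨h, -⟩ | ⟨h, -⟩⟩ <;>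
    · have := congrFun h i
      simp [up, seg] at this

/-- The percolation function of Bernoulli bond percolation on `ℤ^d`. -/
noncomputable def thetaBond (d : ℕ) (lam : ℝ) : ℝ≥0∞ :=
  bondMeasure d lam {σ | {w | (bondGraph σ).Reachable 0 w}.Infinite}

/-- The critical parameter `p_c^bond(d)` of Bernoulli bond percolation on `ℤ^d`. -/
noncomputable def pcBond (d : ℕ) : ℝ :=
  sSup {lam : ℝ | 0 ≤ lam ∧ thetaBond d lam = 0}

/-- The (closed) sup-norm box `B(x,L)` in `ℤ^d`. -/
def box (d : ℕ) (x : Site d) (L : ℝ) : Set (Site d) :=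
  {z | ∀ i, |((z i - x i : ℤ) : ℝ)| ≤ L}

/-- The sphere `∂B(x,L) = {z : ‖z - x‖_∞ = ⌊L⌋}` in `ℤ^d`. -/
def sphere (d : ℕ) (x : Site d) (L : ℝ) : Set (Site d) :=
  {z | (∀ i, |z i - x i| ≤ ⌊L⌋) ∧ ∃ i, |z i - x i| = ⌊L⌋}

/-- The sup-norm distance `‖x - y‖_∞` on `ℤ^d` (as a natural number). -/
def supDist {d : ℕ} (x y : Site d) : ℕ :=
  Finset.univ.sup fun i => (x i - y i).natAbs

/-- The sequence of scales: `L 0 = 10^4` and `L (k+1) = (L k)^(3/2)`. -/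
noncomputable def Lscale : ℕ → ℝ
  | 0 => 10 ^ 4
  | k + 1 => Lscale k ^ ((3 : ℝ) / 2)

/-- `α(p) = -log (1-p)`. -/
noncomputable def alphaP (p : ℝ) : ℝ := - Real.log (1 - p)

/-- The edge `e` has both endpoints in `B`. -/
def EdgeIn {d : ℕ} (B : Set (Site d)) (e : EdgeIdx d) : Prop :=
  e.1 ∈ B ∧ up e.1 e.2 ∈ B

/-- The event `A` is supported on the edges of `B`: it is measurable with respect to
the σ-algebra generated by the states of the edges with both endpoints in `B`. -/
def SupportedOnEdges {d : ℕ} (B : Set (Site d)) (A : Set (Cfg d)) : Prop :=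
  MeasurableSet[MeasurableSpace.comap
    (fun ξ (e : {e : EdgeIdx d // EdgeIn B e}) => edgeState ξ e.1) inferInstance] A

/-- `S` is a set of points of `T` whose `L`-boxes cover `T`. -/
def IsCover (d : ℕ) (T : Set (Site d)) (L : ℝ) (S : Finset (Site d)) : Prop :=
  ↑S ⊆ T ∧ T ⊆ ⋃ x ∈ S, box d x L

/-- `S` is a cover of `T` by `L`-boxes centred in `T`, of minimal cardinality. -/
def IsMinCover (d : ℕ) (T : Set (Site d)) (L : ℝ) (S : Finset (Site d)) : Prop :=
  IsCover d T L S ∧ ∀ S' : Finset (Site d), IsCover d T L S' → S.card ≤ S'.card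

/-!
Conditionally on the site configuration `ω`, every edge of `E` is almost surely covered by a
unique feasible pair (when `p > 0`), and all edges of `E` are open exactly when each of the
`N(ω)` distinct pairs covering them is open, which has probability `λ ^ N(ω)`. Adding occupied
sites only splits segments, so `N` is nondecreasing in `ω`. Realising the sites at every level
`p` by thresholding one family of independent uniform variables at `p` couples the two site
laws with `ω_{p₁} ≤ ω_{p₂}`, and the claim follows by integrating `λ ^ N`.

The site laws `iidBool` are identified with product Bernoulli measures through the skewed
doubling map, which pushes the uniform law on `[0,1)` to `Ber(p) ⊗ uniform`.
-/

open Set ProbabilityTheory unitInterval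

local notation "𝕌" => (volume.restrict (Ico (0 : ℝ) 1) : Measure ℝ)

instance : IsProbabilityMeasure 𝕌 := ⟨by simp⟩

open Finset in
lemma card_image_le_card_image_of_eq_imp {α β γ : Type*} [DecidableEq β] [DecidableEq γ]
    {s : Finset α} {f : α → β} {g : α → γ} (h : ∀ a ∈ s, ∀ b ∈ s, f a = f b → g a = g b) :
    #(s.image g) ≤ #(s.image f) := by
  calc #(s.image g) = #((s.image fun a => (f a, g a)).image Prod.snd) := by
        rw [Finset.image_image]; rfl
    _ ≤ #(s.image fun a => (f a, g a)) := card_image_le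
    _ = #((s.image fun a => (f a, g a)).image Prod.fst) := by
        refine (card_image_of_injOn ?_).symm
        simp only [Set.InjOn, coe_image, Set.mem_image, mem_coe]
        rintro _ ⟨a, ha, rfl⟩ _ ⟨b, hb, rfl⟩ hab
        exact Prod.ext hab (h a ha b hb hab)
    _ = #(s.image f) := by rw [Finset.image_image]; rfl

lemma infinitePi_map_comp_of_injective {ι κ X : Type*} [MeasurableSpace X] (μ : κ → Measure X)
    [∀ k, IsProbabilityMeasure (μ k)] {e : ι → κ} (he : Function.Injective e) :
    (Measure.infinitePi μ).map (fun f i => f (e i)) = Measure.infinitePi fun i => μ (e i) := by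
  classical
  refine Measure.eq_infinitePi _ fun s t ht => ?_
  have hpre : (fun (f : κ → X) i => f (e i)) ⁻¹' (s : Set ι).pi t =
      ((s.image e : Finset κ) : Set κ).pi (Function.extend e t fun _ => univ) := by
    ext f
    simp [he.extend_apply]
  rw [Measure.map_apply (by fun_prop) (.pi s.countable_toSet fun i _ => ht i), hpre,
    Measure.infinitePi_pi]
  · rw [Finset.prod_image he.injOn]
    simp [he.extend_apply]
  · simp only [Finset.mem_image]
    rintro _ ⟨i, -, rfl⟩
    simpa [he.extend_apply] using ht i

lemma map_div_sub_restrict_Ico {a b : ℝ} (hab : a ≤ b) :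
    (volume.restrict (Ico a b)).map (fun x => (x - a) / (b - a)) =
      ENNReal.ofReal (b - a) • 𝕌 := by
  rcases hab.eq_or_lt with rfl | hlt
  · simp
  have hba : 0 < b - a := sub_pos.2 hlt
  have hf : Measurable fun x : ℝ => (x - a) / (b - a) := by fun_prop
  have hI : ∀ T, (fun x : ℝ => (x - a) / (b - a)) ⁻¹' T ∩ Ico a b =
      (fun x => x + -a) ⁻¹' ((fun y => (b - a)⁻¹ * y) ⁻¹' (T ∩ Ico 0 1)) := fun T => by
    ext x
    simp only [mem_inter_iff, mem_preimage, mem_Ico, ← sub_eq_add_neg, ← div_eq_inv_mul,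
      le_div_iff₀ hba, div_lt_one hba]
    constructor <;> rintro ⟨h1, h2, h3⟩ <;> refine ⟨h1, ?_, ?_⟩ <;> linarith
  ext T hT
  rw [Measure.map_apply hf hT, Measure.restrict_apply (hf hT), Measure.smul_apply,
    Measure.restrict_apply hT, smul_eq_mul, hI, measure_preimage_add_right,
    Real.volume_preimage_mul_left (inv_ne_zero hba.ne'), inv_inv, abs_of_pos hba]

lemma ofReal_smul_eq_toNNReal_smul {α : Type*} [MeasurableSpace α] (p : I) (μ : Measure α) :
    ENNReal.ofReal p • μ = toNNReal p • μ := by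
  rw [ENNReal.ofReal_eq_coe_nnreal p.2.1]
  rfl

@[fun_prop]
lemma measurable_bernDigit (p : ℝ) : Measurable (bernDigit p) := by
  unfold bernDigit
  exact Measurable.ite measurableSet_Iio measurable_const measurable_const

@[fun_prop]
lemma measurable_bernShift (p : ℝ) : Measurable (bernShift p) := by
  unfold bernShift
  exact Measurable.ite measurableSet_Iio (by fun_prop) (by fun_prop)

lemma map_bernDigit_bernShift (p : I) :
    Measure.map (fun x => (bernDigit p x, bernShift p x)) 𝕌 = Ber(true, false, p).prod 𝕌 := by
  have hΦ : Measurable fun x => (bernDigit p x, bernShift p x) := by fun_prop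
  have hlow : ∀ x ∈ Ico (0 : ℝ) p, (bernDigit p x, bernShift p x) = (true, x / p) :=
    fun x hx => by simp [bernDigit, bernShift, hx.2]
  have hhigh : ∀ x ∈ Ico (p : ℝ) 1, (bernDigit p x, bernShift p x) = (false, (x - p) / (1 - p)) :=
    fun x hx => by simp [bernDigit, bernShift, not_lt.2 hx.1]
  have hsplit : 𝕌 = volume.restrict (Ico 0 (p : ℝ)) + volume.restrict (Ico (p : ℝ) 1) := by
    rw [← Measure.restrict_add_restrict_compl (μ := 𝕌) (measurableSet_Iio (a := (p : ℝ))),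
      Measure.restrict_restrict measurableSet_Iio,
      Measure.restrict_restrict measurableSet_Iio.compl, compl_Iio, Set.inter_comm,
      Ico_inter_Iio, min_eq_right p.2.2, Set.inter_comm, Ico_inter_Ici, max_eq_right p.2.1]
  conv_lhs => rw [hsplit]
  rw [Measure.map_add _ _ hΦ, bernoulliMeasure_def, Measure.add_prod, Measure.prod_smul_left,
    Measure.prod_smul_left, Measure.dirac_prod, Measure.dirac_prod]
  congr 1
  · rw [Measure.map_congr (ae_restrict_of_forall_mem measurableSet_Ico hlow)]
    have h := map_div_sub_restrict_Ico p.2.1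
    simp only [sub_zero] at h
    rw [← ofReal_smul_eq_toNNReal_smul, ← Measure.map_smul, ← h,
      Measure.map_map (by fun_prop) (by fun_prop)]
    rfl
  · rw [Measure.map_congr (ae_restrict_of_forall_mem measurableSet_Ico hhigh),
      ← ofReal_smul_eq_toNNReal_smul, coe_symm_eq, ← Measure.map_smul,
      ← map_div_sub_restrict_Ico p.2.2, Measure.map_map (by fun_prop) (by fun_prop)]
    rfl

lemma measurable_bernDigits (p : ℝ) : Measurable (bernDigits p) :=
  measurable_pi_lambda _ fun n =>
    (measurable_bernDigit p).comp ((measurable_bernShift p).iterate n)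

lemma bernDigits_succ (p x : ℝ) (n : ℕ) :
    bernDigits p x (n + 1) = bernDigits p (bernShift p x) n := by
  simp only [bernDigits, Function.iterate_succ_apply]

lemma volume_bernDigits_mem (p : I) (n : ℕ) (t : ℕ → Set Bool) :
    𝕌 {x | ∀ k < n, bernDigits p x k ∈ t k} =
      ∏ k ∈ Finset.range n, Ber(true, false, p) (t k) := by
  induction n generalizing t with
  | zero => simp
  | succ n ih =>
    have hcyl : MeasurableSet {f : ℕ → Bool | ∀ k < n, f k ∈ t (k + 1)} := by measurability
    have hS : MeasurableSet {y | ∀ k < n, bernDigits p y k ∈ t (k + 1)} :=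
      measurable_bernDigits p hcyl
    have hpre : {x | ∀ k < n + 1, bernDigits p x k ∈ t k} =
        (fun x => (bernDigit p x, bernShift p x)) ⁻¹'
          (t 0 ×ˢ {y | ∀ k < n, bernDigits p y k ∈ t (k + 1)}) := by
      ext x
      simp only [mem_ofPred_eq, Nat.forall_lt_succ_left, bernDigits_succ, mem_preimage, mem_prod]
      rfl
    rw [hpre, ← Measure.map_apply (by fun_prop) (MeasurableSet.of_discrete.prod hS),
      map_bernDigit_bernShift, Measure.prod_prod, ih, Finset.prod_range_succ', mul_comm]

lemma map_bernDigits (p : I) :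
    Measure.map (bernDigits p) 𝕌 = Measure.infinitePi (fun _ : ℕ => Ber(true, false, p)) := by
  classical
  refine Measure.eq_infinitePi _ fun s t _ => ?_
  obtain ⟨n, hsn⟩ := Finset.exists_nat_subset_range s
  have hpre : bernDigits p ⁻¹' (s : Set ℕ).pi t =
      {x | ∀ k < n, bernDigits p x k ∈ if k ∈ s then t k else univ} := by
    ext x
    simp only [mem_preimage, mem_pi, Finset.mem_coe, mem_ofPred_eq]
    constructor
    · intro h k _
      split_ifs with hk
      exacts [h k hk, mem_univ _]
    · intro h k hk
      simpa [hk] using h k (Finset.mem_range.1 (hsn hk))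
  rw [Measure.map_apply (measurable_bernDigits p) (.pi s.countable_toSet fun _ _ => .of_discrete),
    hpre, volume_bernDigits_mem]
  simp only [apply_ite (Ber(true, false, p) ·), measure_univ]
  rw [Finset.prod_ite_mem, Finset.inter_eq_right.2 hsn]

lemma iidBool_eq_infinitePi (ι : Type*) [Countable ι] (p : I) :
    iidBool ι p = Measure.infinitePi fun _ : ι => Ber(true, false, p) := by
  rw [iidBool, map_bernDigits,
    infinitePi_map_comp_of_injective _ (Countable.exists_injective_nat ι).choose_spec]

lemma map_bernDigit (p : I) : Measure.map (bernDigit p) 𝕌 = Ber(true, false, p) := by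
  have h := congrArg (Measure.map Prod.fst) (map_bernDigit_bernShift p)
  rwa [Measure.map_map measurable_fst (by fun_prop), Measure.map_fst_prod, measure_univ,
    one_smul] at h

lemma iidBool_eq_map_bernDigit (ι : Type*) [Countable ι] (p : I) :
    iidBool ι p = (Measure.infinitePi fun _ : ι => 𝕌).map fun u i => bernDigit p (u i) := by
  rw [iidBool_eq_infinitePi, Measure.infinitePi_map_pi _ fun _ => measurable_bernDigit p]
  simp_rw [map_bernDigit]

lemma bernDigit_mono {p q : ℝ} (h : p ≤ q) (x : ℝ) : bernDigit p x ≤ bernDigit q x := by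
  by_cases hx : x < p
  · simp [bernDigit, hx, hx.trans_le h]
  · simp [bernDigit, hx]

instance (ι : Type*) [Countable ι] (p : ℝ) : IsFiniteMeasure (iidBool ι p) := by
  unfold iidBool; infer_instance

lemma ae_exists_eq_true {ι : Type*} [Countable ι] (p : I) (hp : 0 < (p : ℝ)) {g : ℕ → ι}
    (hg : Function.Injective g) : ∀ᵐ ω ∂iidBool ι p, ∃ k, ω (g k) = true := by
  classical
  have hlt : (toNNReal (σ p) : ℝ≥0∞) < 1 := by
    rw [ENNReal.coe_lt_one_iff, ← NNReal.coe_lt_one, unitInterval.coe_toNNReal, coe_symm_eq]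
    linarith
  have hbound : ∀ n, iidBool ι p {ω | ¬ ∃ k, ω (g k) = true} ≤ (toNNReal (σ p) : ℝ≥0∞) ^ n := by
    intro n
    calc iidBool ι p {ω | ¬ ∃ k, ω (g k) = true}
        ≤ iidBool ι p ((((Finset.range n).image g : Finset ι) : Set ι).pi fun _ => {false}) := by
          refine measure_mono fun ω hω => ?_
          simp_all
      _ = (toNNReal (σ p) : ℝ≥0∞) ^ n := by
          rw [iidBool_eq_infinitePi, Measure.infinitePi_pi _ fun _ _ => .of_discrete,
            Finset.prod_image hg.injOn, Finset.prod_const, Finset.card_range,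
            bernoulliMeasure_apply_of_notMem_of_mem _ .of_discrete (by simp) (mem_singleton _)]
  rw [ae_iff]
  exact le_antisymm
    (ge_of_tendsto' (ENNReal.tendsto_pow_atTop_nhds_zero_of_lt_one hlt) hbound) zero_le

section Geometry

variable {d : ℕ}

@[simp] lemma seg_apply_self (u : Site d) (i : Fin d) (a : ℤ) : seg u i a i = a := by
  simp [seg]

lemma seg_apply_of_ne (u : Site d) {i j : Fin d} (a : ℤ) (h : j ≠ i) : seg u i a j = u j := by
  rw [seg, Function.update_of_ne h]

@[simp] lemma seg_seg (u : Site d) (i : Fin d) (a c : ℤ) : seg (seg u i a) i c = seg u i c := by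
  simp [seg]

lemma seg_injective (u : Site d) (i : Fin d) : Function.Injective (seg u i) := fun a b h => by
  simpa using congrFun h i

/-- `a` and `b` are the coordinates, in the direction of `e`, of the endpoints of the feasible
pair of `ω` whose segment contains `e`. -/
def SpansEdge (ω : SiteCfg d) (e : EdgeIdx d) (a b : ℤ) : Prop :=
  a ≤ e.1 e.2 ∧ e.1 e.2 < b ∧ ω (seg e.1 e.2 a) = true ∧ ω (seg e.1 e.2 b) = true ∧
    ∀ c, a < c → c < b → ω (seg e.1 e.2 c) = false

variable {ω ω' : SiteCfg d} {e f : EdgeIdx d} {v w : Site d} {a b c : ℤ}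

lemma feasiblePair_and_edgeOnSeg_iff :
    FeasiblePair ω v w ∧ EdgeOnSeg e v w ↔
      ∃ a b, SpansEdge ω e a b ∧ v = seg e.1 e.2 a ∧ w = seg e.1 e.2 b := by
  constructor
  · rintro ⟨⟨i, hoff, hlt, hv, hw, hgap⟩, a, b, ha, hb, rfl, rfl⟩
    obtain rfl : i = e.2 := by
      by_contra hi
      have := hoff e.2 (Ne.symm hi)
      simp only [seg_apply_self] at this
      omega
    simp only [seg_apply_self, seg_seg] at hlt hgap
    exact ⟨a, b, ⟨ha, hb, hv, hw, hgap⟩, rfl, rfl⟩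
  · rintro ⟨a, b, ⟨ha, hb, hv, hw, hgap⟩, rfl, rfl⟩
    refine ⟨⟨e.2, fun j hj => ?_, ?_, hv, hw, ?_⟩, a, b, ha, hb, rfl, rfl⟩
    · rw [seg_apply_of_ne _ _ hj, seg_apply_of_ne _ _ hj]
    · simp only [seg_apply_self]; omega
    · simpa using hgap

lemma SpansEdge.le_left (h : SpansEdge ω e a b) (hc : c ≤ e.1 e.2)
    (hocc : ω (seg e.1 e.2 c) = true) : c ≤ a := by
  by_contra! hac
  have := h.2.2.2.2 c hac (by linarith [h.2.1])
  simp_all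

lemma SpansEdge.right_le (h : SpansEdge ω e a b) (hc : e.1 e.2 < c)
    (hocc : ω (seg e.1 e.2 c) = true) : b ≤ c := by
  by_contra! hcb
  have := h.2.2.2.2 c (by linarith [h.1]) hcb
  simp_all

lemma SpansEdge.unique {a' b' : ℤ} (h : SpansEdge ω e a b) (h' : SpansEdge ω e a' b') :
    a = a' ∧ b = b' :=
  ⟨le_antisymm (h'.le_left h.1 h.2.2.1) (h.le_left h'.1 h'.2.2.1),
    le_antisymm (h.right_le h'.2.1 h'.2.2.2.1) (h'.right_le h.2.1 h.2.2.2.1)⟩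

lemma exists_spansEdge (hlow : ∃ a ≤ e.1 e.2, ω (seg e.1 e.2 a) = true)
    (hhigh : ∃ b > e.1 e.2, ω (seg e.1 e.2 b) = true) : ∃ a b, SpansEdge ω e a b := by
  obtain ⟨a, ⟨ha, hva⟩, hamax⟩ := Int.exists_greatest_of_bdd
    (P := fun a => a ≤ e.1 e.2 ∧ ω (seg e.1 e.2 a) = true) ⟨e.1 e.2, fun _ h => h.1⟩ hlow
  obtain ⟨b, ⟨hb, hwb⟩, hbmin⟩ := Int.exists_least_of_bdd
    (P := fun b => e.1 e.2 < b ∧ ω (seg e.1 e.2 b) = true) ⟨e.1 e.2, fun _ h => h.1.le⟩ hhigh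
  refine ⟨a, b, ha, hb, hva, hwb, fun c hac hcb => ?_⟩
  by_contra hc
  rw [Bool.not_eq_false] at hc
  rcases le_or_gt c (e.1 e.2) with hce | hce
  · exact absurd (hamax c ⟨hce, hc⟩) (not_le.2 hac)
  · exact absurd (hbmin c ⟨hce, hc⟩) (not_le.2 hcb)

lemma edgeOnSeg_seg_of_le {a' b' : ℤ} (h : EdgeOnSeg f (seg e.1 e.2 a') (seg e.1 e.2 b'))
    (ha : a ≤ a') (hb : b' ≤ b) : EdgeOnSeg f (seg e.1 e.2 a) (seg e.1 e.2 b) := by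
  obtain ⟨u, i⟩ := e
  obtain ⟨u', j⟩ := f
  obtain ⟨a'', b'', ha'', hb'', hva, hwb⟩ := h
  dsimp only at *
  obtain rfl : j = i := by
    by_contra hji
    have h1 := congrFun hva j
    have h2 := congrFun hwb j
    simp only [seg_apply_self, seg_apply_of_ne _ _ hji] at h1 h2
    omega
  have hline : ∀ c, seg u j c = seg u' j c := fun c => by
    funext k
    by_cases hk : k = j
    · subst hk; simp
    · have := congrFun hva k
      simp only [seg_apply_of_ne _ _ hk] at this
      simp only [seg_apply_of_ne _ _ hk, this]
  simp only [hline] at hva hwb ⊢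
  obtain rfl := seg_injective _ _ hva
  obtain rfl := seg_injective _ _ hwb
  refine ⟨a, b, ?_, ?_, rfl, rfl⟩ <;> dsimp only <;> omega

def Covers (ω : SiteCfg d) (e : EdgeIdx d) : Prop :=
  ∃ s : Site d × Site d, FeasiblePair ω s.1 s.2 ∧ EdgeOnSeg e s.1 s.2

/-- A junk value when `¬ Covers ω e`. -/
noncomputable def coverPair (ω : SiteCfg d) (e : EdgeIdx d) : Site d × Site d :=
  Classical.epsilon fun s => FeasiblePair ω s.1 s.2 ∧ EdgeOnSeg e s.1 s.2

lemma covers_iff_exists_spansEdge : Covers ω e ↔ ∃ a b, SpansEdge ω e a b := by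
  simp only [Covers, feasiblePair_and_edgeOnSeg_iff]
  constructor
  · rintro ⟨_, a, b, h, -⟩
    exact ⟨a, b, h⟩
  · rintro ⟨a, b, h⟩
    exact ⟨(seg e.1 e.2 a, seg e.1 e.2 b), a, b, h, rfl, rfl⟩

lemma coverPair_spec (h : Covers ω e) :
    FeasiblePair ω (coverPair ω e).1 (coverPair ω e).2 ∧
      EdgeOnSeg e (coverPair ω e).1 (coverPair ω e).2 :=
  Classical.epsilon_spec h

lemma coverPair_eq_of_spansEdge (h : SpansEdge ω e a b) :
    coverPair ω e = (seg e.1 e.2 a, seg e.1 e.2 b) := by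
  obtain ⟨a', b', h', hv, hw⟩ :=
    feasiblePair_and_edgeOnSeg_iff.1 (coverPair_spec (covers_iff_exists_spansEdge.2 ⟨a, b, h⟩))
  obtain ⟨rfl, rfl⟩ := h.unique h'
  exact Prod.ext hv hw

lemma coverPair_eq (hf : FeasiblePair ω v w) (he : EdgeOnSeg e v w) : coverPair ω e = (v, w) := by
  obtain ⟨a, b, h, rfl, rfl⟩ := feasiblePair_and_edgeOnSeg_iff.1 ⟨hf, he⟩
  exact coverPair_eq_of_spansEdge h

lemma Covers.mono (hle : ω ≤ ω') (h : Covers ω e) : Covers ω' e := by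
  obtain ⟨a, b, ha, hb, hva, hwb, -⟩ := covers_iff_exists_spansEdge.1 h
  exact covers_iff_exists_spansEdge.2 <|
    exists_spansEdge ⟨a, ha, hle _ hva⟩ ⟨b, hb, hle _ hwb⟩

/-- The segment of `e` in `ω` contains its segment in the denser configuration `ω'`. -/
lemma coverPair_eq_of_le (hle : ω ≤ ω') (he : Covers ω e) (hf : Covers ω f)
    (hef : coverPair ω' e = coverPair ω' f) : coverPair ω e = coverPair ω f := by
  obtain ⟨a, b, hab⟩ := covers_iff_exists_spansEdge.1 he
  obtain ⟨a', b', hab'⟩ := covers_iff_exists_spansEdge.1 (he.mono hle)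
  have hf' : EdgeOnSeg f (seg e.1 e.2 a') (seg e.1 e.2 b') := by
    simpa [← hef, coverPair_eq_of_spansEdge hab'] using (coverPair_spec (hf.mono hle)).2
  have hfab : EdgeOnSeg f (seg e.1 e.2 a) (seg e.1 e.2 b) :=
    edgeOnSeg_seg_of_le hf' (hab'.le_left hab.1 (hle _ hab.2.2.1))
      (hab'.right_le hab.2.1 (hle _ hab.2.2.2.1))
  have hfeas := (feasiblePair_and_edgeOnSeg_iff.2 ⟨a, b, hab, rfl, rfl⟩).1
  rw [coverPair_eq_of_spansEdge hab, coverPair_eq hfeas hfab]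

end Geometry

section Labels

variable {d : ℕ} {ω ω' : SiteCfg d} {E : Finset (EdgeIdx d)}

lemma setOf_allOpen_eq_pi (hcov : ∀ e ∈ E, Covers ω e) :
    {τ : PairLabels d | ∀ e ∈ E, EdgeOpen (ω, τ) e} =
      ((E.image (coverPair ω) : Finset _) : Set (Site d × Site d)).pi fun _ => {true} := by
  ext τ
  simp only [mem_ofPred_eq, mem_pi, Finset.coe_image, mem_image, Finset.mem_coe,
    mem_singleton_iff, forall_exists_index, and_imp, forall_apply_eq_imp_iff₂]
  refine ⟨fun h e he => ?_, fun h e he => ?_⟩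
  · obtain ⟨v, w, hf, hs, hτ⟩ := h e he
    rwa [coverPair_eq hf hs]
  · exact ⟨_, _, (coverPair_spec (hcov e he)).1, (coverPair_spec (hcov e he)).2, h e he⟩

lemma iidBool_setOf_allOpen (lam : I) (hcov : ∀ e ∈ E, Covers ω e) :
    iidBool (Site d × Site d) lam {τ | ∀ e ∈ E, EdgeOpen (ω, τ) e} =
      (toNNReal lam : ℝ≥0∞) ^ (E.image (coverPair ω)).card := by
  rw [setOf_allOpen_eq_pi hcov, iidBool_eq_infinitePi,
    Measure.infinitePi_pi _ fun _ _ => .of_discrete, Finset.prod_const,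
    bernoulliMeasure_apply_of_mem_of_notMem _ .of_discrete (mem_singleton _) (by simp)]

lemma iidBool_setOf_allOpen_anti (lam : I) (hle : ω ≤ ω') (hcov : ∀ e ∈ E, Covers ω e) :
    iidBool (Site d × Site d) lam {τ | ∀ e ∈ E, EdgeOpen (ω', τ) e} ≤
      iidBool (Site d × Site d) lam {τ | ∀ e ∈ E, EdgeOpen (ω, τ) e} := by
  rw [iidBool_setOf_allOpen lam hcov, iidBool_setOf_allOpen lam fun e he => (hcov e he).mono hle]
  refine pow_le_pow_of_le_one zero_le (ENNReal.coe_le_one_iff.2 (by exact_mod_cast lam.2.2)) ?_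
  exact card_image_le_card_image_of_eq_imp fun e he f hf hef =>
    coverPair_eq_of_le hle (hcov e he) (hcov f hf) hef

end Labels

lemma ae_covers {d : ℕ} (p : I) (hp : 0 < (p : ℝ)) (e : EdgeIdx d) :
    ∀ᵐ ω ∂iidBool (Site d) p, Covers ω e := by
  have hdown := ae_exists_eq_true p hp (g := fun k : ℕ => seg e.1 e.2 (e.1 e.2 - k))
    ((seg_injective _ _).comp fun k l h => by omega)
  have hup := ae_exists_eq_true p hp (g := fun k : ℕ => seg e.1 e.2 (e.1 e.2 + 1 + k))
    ((seg_injective _ _).comp fun k l h => by omega)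
  filter_upwards [hdown, hup] with ω ⟨k, hk⟩ ⟨l, hl⟩
  exact covers_iff_exists_spansEdge.2 (exists_spansEdge ⟨_, by omega, hk⟩ ⟨_, by omega, hl⟩)

lemma measurableSet_setOf_allOpen {d : ℕ} (E : Finset (EdgeIdx d)) :
    MeasurableSet {ξ : Cfg d | ∀ e ∈ E, EdgeOpen ξ e} := by
  simp only [EdgeOpen, FeasiblePair, measurableSet_setOfPred]
  measurability

lemma alignMeasure_eq_lintegral {d : ℕ} (p : I) (lam : ℝ) {A : Set (Cfg d)}
    (hA : MeasurableSet A) :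
    alignMeasure d p lam A = ∫⁻ u, iidBool (Site d × Site d) lam
      (Prod.mk (fun v => bernDigit p (u v)) ⁻¹' A) ∂Measure.infinitePi fun _ : Site d => 𝕌 := by
  rw [alignMeasure, Measure.prod_apply hA, iidBool_eq_map_bernDigit,
    lintegral_map (measurable_measure_prodMk_left hA) (by fun_prop)]

theorem all_open_antitone_general (d : ℕ) (lam : ℝ) (hlam : lam ∈ Set.Icc (0 : ℝ) 1)
    (E : Finset (EdgeIdx d)) (p1 p2 : ℝ) (hp1 : 0 < p1) (h12 : p1 < p2) (hp2 : p2 ≤ 1) :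
    alignMeasure d p2 lam {ξ | ∀ e ∈ E, EdgeOpen ξ e} ≤
      alignMeasure d p1 lam {ξ | ∀ e ∈ E, EdgeOpen ξ e} := by
  let q1 : I := ⟨p1, hp1.le, h12.le.trans hp2⟩
  let q2 : I := ⟨p2, hp1.le.trans h12.le, hp2⟩
  have hA := measurableSet_setOf_allOpen E
  rw [show p1 = q1 from rfl, show p2 = q2 from rfl, alignMeasure_eq_lintegral q1 lam hA,
    alignMeasure_eq_lintegral q2 lam hA]
  have hcov : ∀ᵐ u ∂Measure.infinitePi (fun _ : Site d => 𝕌),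
      ∀ e ∈ E, Covers (fun v => bernDigit q1 (u v)) e := by
    refine ae_of_ae_map (f := fun (u : Site d → ℝ) v => bernDigit q1 (u v))
      (p := fun ω => ∀ e ∈ E, Covers ω e) (Measurable.aemeasurable (by fun_prop)) ?_
    rw [← iidBool_eq_map_bernDigit]
    exact (Filter.eventually_all_finset E).2 fun e _ => ae_covers q1 hp1 e
  refine lintegral_mono_ae (hcov.mono fun u hu => ?_)
  exact iidBool_setOf_allOpen_anti ⟨lam, hlam⟩ (fun v => bernDigit_mono h12.le (u v)) hu

/-- Fix `d ≥ 2`, `λ ∈ [0,1]`. For every finite set `E` of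
nearest-neighbour edges of `ℤ^d`, the probability that all edges of `E` are open is
non-increasing in the site parameter `p`. -/
theorem all_open_antitone (d : ℕ) (hd : 2 ≤ d) (lam : ℝ) (hlam : lam ∈ Set.Icc (0 : ℝ) 1)
    (E : Finset (EdgeIdx d)) (p1 p2 : ℝ) (hp1 : 0 < p1) (h12 : p1 < p2) (hp2 : p2 ≤ 1) :
    alignMeasure d p2 lam {ξ | ∀ e ∈ E, EdgeOpen ξ e} ≤
      alignMeasure d p1 lam {ξ | ∀ e ∈ E, EdgeOpen ξ e} :=
  all_open_antitone_general d lam hlam E p1 p2 hp1 h12 hp2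

end AlignmentPercolation
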